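/- Let a, b > 0 with a ≠ b. Then the ambiguity functions A(η_a ∗ η_b, η_a ∗ η_b) and A(η_a ∗ Iη_b, η_a ∗ Iη_b) have no zeros: for every (x,ξ) ∈ ℝ², A(η_a ∗ η_b, η_a ∗ η_b)(x,ξ) ≠ 0 and A(η_a ∗ Iη_b, η_a ∗ Iη_b)(x,ξ) ≠ 0. -/

import Mathlib

open MeasureTheory Complex

/-- The cross-ambiguity function of `f, g : ℝ → ℂ`. -/
noncomputable def ambiguity (f g : ℝ → ℂ) (x ξ : ℝ) : ℂ :=
  ∫ t : ℝ, f (t + x / 2) * (starRingEnd ℂ) (g (t - x / 2)) *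
    Complex.exp (-2 * Real.pi * Complex.I * ξ * t)

/-- The one-sided exponential `η_a(t) = e^{-at} 1_{(0,∞)}(t)`. -/
noncomputable def eta (a : ℝ) : ℝ → ℂ :=
  fun t => if 0 < t then Complex.exp (-(a : ℂ) * t) else 0

/-- Convolution of two functions on `ℝ`. -/
noncomputable def conv (f g : ℝ → ℂ) (x : ℝ) : ℂ :=
  ∫ t : ℝ, f t * g (x - t)

open Set Filter Topology

lemma cexp_norm (c : ℂ) (t : ℝ) : ‖Complex.exp (c * t)‖ = Real.exp (c.re * t) := by
  rw [Complex.norm_exp]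
  norm_num

lemma integrableOn_cexp_Ioi {c : ℂ} (hc : c.re < 0) (m : ℝ) :
    IntegrableOn (fun t : ℝ => Complex.exp (c * t)) (Ioi m) := by
  apply Integrable.mono' (g := fun t : ℝ => Real.exp (-(-c.re) * t))
  · have := exp_neg_integrableOn_Ioi m (by linarith : (0:ℝ) < -c.re)
    simp only [neg_neg] at this ⊢
    exact this
  · exact (Complex.continuous_exp.comp (continuous_const.mul Complex.continuous_ofReal)).aestronglyMeasurable.restrict
  · filter_upwards with t
    rw [cexp_norm]
    simp

lemma integral_cexp_Ioi {c : ℂ} (hc : c.re < 0) (m : ℝ) :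
    ∫ t in Ioi m, Complex.exp (c * t) = -Complex.exp (c * m) / c := by
  have hc0 : c ≠ 0 := fun h => by simp [h] at hc
  have D : ∀ x : ℝ, HasDerivAt (fun y : ℝ => Complex.exp (c * y) / c) (Complex.exp (c * x)) x := by
    intro x
    rw [← mul_div_cancel_right₀ (Complex.exp (c * x)) hc0]
    apply ((Complex.hasDerivAt_exp _).comp x _).div_const c
    simpa only [mul_one, id_eq] using ((hasDerivAt_id (x : ℂ)).const_mul _).comp_ofReal
  have ht : Tendsto (fun y : ℝ => Complex.exp (c * y) / c) atTop (𝓝 0) := by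
    rw [show (0:ℂ) = 0 / c by simp]
    apply Tendsto.div_const
    rw [tendsto_zero_iff_norm_tendsto_zero]
    simp only [cexp_norm]
    exact Real.tendsto_exp_atBot.comp (tendsto_id.const_mul_atTop_of_neg hc)
  rw [integral_Ioi_of_hasDerivAt_of_tendsto' (fun x _ => D x) (integrableOn_cexp_Ioi hc m) ht]
  ring

lemma integrableOn_cexp_Iic {c : ℂ} (hc : 0 < c.re) (m : ℝ) :
    IntegrableOn (fun t : ℝ => Complex.exp (c * t)) (Iic m) := by
  have h1 : IntegrableOn (fun t : ℝ => Complex.exp ((-c) * t)) (Ici (-m)) := by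
    rw [integrableOn_Ici_iff_integrableOn_Ioi]
    exact integrableOn_cexp_Ioi (by simpa using hc) (-m)
  have h2 := ((integrable_indicator_iff measurableSet_Ici).mpr h1).comp_neg
  have h3 : (Set.indicator (Ici (-m)) (fun t : ℝ => Complex.exp ((-c) * t))) ∘ (fun t : ℝ => -t)
      = Set.indicator (Iic m) (fun t : ℝ => Complex.exp (c * t)) := by
    funext t
    by_cases ht : t ≤ m
    · rw [Function.comp_apply, Set.indicator_of_mem (by simpa using ht),
        Set.indicator_of_mem (by simpa using ht)]
      push_cast
      ring_nf
    · rw [Function.comp_apply, Set.indicator_of_notMem (by simpa using ht),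
        Set.indicator_of_notMem (by simpa using ht)]
  rw [← integrable_indicator_iff measurableSet_Iic, ← h3]
  exact h2

lemma integral_cexp_Iic {c : ℂ} (hc : 0 < c.re) (m : ℝ) :
    ∫ t in Iic m, Complex.exp (c * t) = Complex.exp (c * m) / c := by
  have hc0 : c ≠ 0 := fun h => by simp [h] at hc
  have D : ∀ x : ℝ, HasDerivAt (fun y : ℝ => Complex.exp (c * y) / c) (Complex.exp (c * x)) x := by
    intro x
    rw [← mul_div_cancel_right₀ (Complex.exp (c * x)) hc0]
    apply ((Complex.hasDerivAt_exp _).comp x _).div_const c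
    simpa only [mul_one, id_eq] using ((hasDerivAt_id (x : ℂ)).const_mul _).comp_ofReal
  have ht : Tendsto (fun y : ℝ => Complex.exp (c * y) / c) atBot (𝓝 0) := by
    rw [show (0:ℂ) = 0 / c by simp]
    apply Tendsto.div_const
    rw [tendsto_zero_iff_norm_tendsto_zero]
    simp only [cexp_norm]
    exact Real.tendsto_exp_atBot.comp ((tendsto_const_mul_atBot_of_pos hc).mpr tendsto_id)
  rw [integral_Iic_of_hasDerivAt_of_tendsto' (fun x _ => D x) (integrableOn_cexp_Iic hc m) ht]
  ring

lemma integrableOn_cexp_Ioc (c : ℂ) (p q : ℝ) :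
    IntegrableOn (fun t : ℝ => Complex.exp (c * t)) (Ioc p q) :=
  ((Complex.continuous_exp.comp (continuous_const.mul
    Complex.continuous_ofReal)).integrableOn_Ioc)

lemma integral_cexp_Ioc {c : ℂ} (hc : c ≠ 0) {p q : ℝ} (h : p ≤ q) :
    ∫ t in Ioc p q, Complex.exp (c * t) = (Complex.exp (c * q) - Complex.exp (c * p)) / c := by
  rw [← intervalIntegral.integral_of_le h, integral_exp_mul_complex hc]

lemma conv_eta_eta (a b : ℝ) (ha : 0 < a) (hb : 0 < b) (hab : a ≠ b) :
    conv (_root_.eta a) (_root_.eta b) = fun x : ℝ => if 0 < x then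
      (Complex.exp (-(a:ℂ) * x) - Complex.exp (-(b:ℂ) * x)) / ((b:ℂ) - a) else 0 := by
  have hba : (b:ℂ) - a ≠ 0 := by
    intro h
    apply hab
    have := congrArg Complex.re h
    simp at this
    linarith
  funext x
  rw [conv]
  by_cases hx : 0 < x
  · rw [if_pos hx]
    have key : (fun t : ℝ => _root_.eta a t * _root_.eta b (x - t)) =
        Set.indicator (Ioo 0 x) (fun t : ℝ =>
          Complex.exp (-(b:ℂ) * x) * Complex.exp (((b:ℂ) - a) * t)) := by
      funext t
      by_cases ht : t ∈ Ioo 0 x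
      · rw [Set.indicator_of_mem ht, _root_.eta, _root_.eta, if_pos ht.1, if_pos (by simp [ht.2] : (0:ℝ) < x - t),
          ← Complex.exp_add, ← Complex.exp_add]
        push_cast
        ring_nf
      · rw [Set.indicator_of_notMem ht]
        rcases not_and_or.mp ht with h | h
        · rw [_root_.eta, if_neg h, zero_mul]
        · have : ¬ (0:ℝ) < x - t := by simp at h ⊢; linarith
          rw [_root_.eta, _root_.eta, if_neg this, mul_zero]
    rw [key, integral_indicator measurableSet_Ioo, ← integral_Ioc_eq_integral_Ioo,
      ← intervalIntegral.integral_of_le hx.le, intervalIntegral.integral_const_mul,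
      integral_exp_mul_complex hba]
    rw [Complex.ofReal_zero, mul_zero, Complex.exp_zero, ← mul_div_assoc]
    rw [div_eq_div_iff hba hba, mul_comm]
    have h2 : Complex.exp (-(b:ℂ) * x) * Complex.exp (((b:ℂ) - a) * x) = Complex.exp (-(a:ℂ) * x) := by
      rw [← Complex.exp_add]; ring_nf
    linear_combination ((b:ℂ) - a) * h2
  · rw [if_neg hx]
    have key : (fun t : ℝ => _root_.eta a t * _root_.eta b (x - t)) = fun _ => (0:ℂ) := by
      funext t
      by_cases ht : 0 < t
      · have : ¬ (0:ℝ) < x - t := by push_neg at hx ⊢; linarith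
        rw [_root_.eta, _root_.eta, if_neg this, mul_zero]
      · rw [_root_.eta, if_neg ht, zero_mul]
    rw [key, integral_zero]

lemma conv_eta_Ieta (a b : ℝ) (ha : 0 < a) (hb : 0 < b) :
    conv (_root_.eta a) (fun t => _root_.eta b (-t)) = fun x : ℝ =>
      ((Real.exp (b * x - (a + b) * max 0 x) / (a + b) : ℝ) : ℂ) := by
  funext x
  rw [conv]
  have key : (fun t : ℝ => _root_.eta a t * _root_.eta b (-(x - t))) =
      Set.indicator (Ioi (max 0 x)) (fun t : ℝ =>
        Complex.exp ((b:ℂ) * x) * Complex.exp ((-(a:ℂ) - b) * t)) := by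
    funext t
    by_cases ht : t ∈ Ioi (max 0 x)
    · have ht0 : 0 < t := lt_of_le_of_lt (le_max_left 0 x) ht
      have htx : (0:ℝ) < -(x - t) := by
        have := lt_of_le_of_lt (le_max_right 0 x) ht; linarith
      rw [Set.indicator_of_mem ht, _root_.eta, _root_.eta, if_pos ht0, if_pos htx,
        ← Complex.exp_add, ← Complex.exp_add]
      push_cast
      ring_nf
    · rw [Set.indicator_of_notMem ht]
      simp only [mem_Ioi, max_lt_iff, not_and_or, not_lt] at ht
      rcases ht with h | h
      · rw [_root_.eta, if_neg (by simpa using h), zero_mul]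
      · have : ¬ (0:ℝ) < -(x - t) := by simp; linarith
        rw [_root_.eta, _root_.eta, if_neg this, mul_zero]
  rw [key, integral_indicator measurableSet_Ioi, MeasureTheory.integral_const_mul,
    integral_cexp_Ioi (by simp; linarith) (max 0 x)]
  rw [Complex.ofReal_div, Complex.ofReal_exp]
  have hab : ((a:ℂ) + b) ≠ 0 := by
    intro h
    have := congrArg Complex.re h
    simp at this
    linarith
  have hneg : -(a:ℂ) - b ≠ 0 := by
    intro h
    have := congrArg Complex.re h
    simp at this
    linarith
  rw [show Complex.exp ((b:ℂ) * x) * (-Complex.exp ((-(a:ℂ) - b) * (max 0 x : ℝ)) / (-(a:ℂ) - b))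
      = (Complex.exp ((b:ℂ) * x) * Complex.exp ((-(a:ℂ) - b) * (max 0 x : ℝ))) / ((a:ℂ) + b) from by
    field_simp
    ring]
  rw [← Complex.exp_add]
  push_cast
  congr 1
  ring

lemma conj_cexp_neg (a u : ℝ) :
    (starRingEnd ℂ) (Complex.exp (-(a:ℂ) * u)) = Complex.exp (-(a:ℂ) * u) := by
  rw [← Complex.exp_conj]
  congr 1
  simp

lemma amb1 (a b : ℝ) (ha : 0 < a) (hb : 0 < b) (hab : a ≠ b) (x ξ : ℝ) :
    ambiguity (conv (_root_.eta a) (_root_.eta b)) (conv (_root_.eta a) (_root_.eta b)) x ξ ≠ 0 := by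
  have hba : (b:ℂ) - a ≠ 0 := by
    intro h
    apply hab
    have := congrArg Complex.re h
    simp at this
    linarith
  simp only [ambiguity]
  set s : ℝ := x / 2 with hs
  set m : ℝ := |s| with hm
  have hsm : -m ≤ s := neg_abs_le s
  have hsm' : s ≤ m := le_abs_self s
  have hm0 : 0 ≤ m := abs_nonneg s
  set ζ : ℂ := 2 * (Real.pi : ℂ) * Complex.I * (ξ : ℂ) with hζ
  have hζre : ζ.re = 0 := by rw [hζ]; simp
  set A1 : ℝ := Real.exp (-(2*a)*m) with hA1
  set A2 : ℝ := Real.exp (-(a+b)*m) with hA2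
  set A3 : ℝ := Real.exp (-(2*b)*m) with hA3
  set E : ℂ := Complex.exp (-(ζ * (m:ℂ))) with hE
  -- nonzero denominators
  have hd1 : (2*(a:ℂ) + ζ) ≠ 0 := by
    intro h
    have := congrArg Complex.re h
    simp [hζre] at this
    linarith
  have hd2 : ((a:ℂ) + b + ζ) ≠ 0 := by
    intro h
    have := congrArg Complex.re h
    simp [hζre] at this
    linarith
  have hd3 : (2*(b:ℂ) + ζ) ≠ 0 := by
    intro h
    have := congrArg Complex.re h
    simp [hζre] at this
    linarith
  have hr1 : (-(2*(a:ℂ) + ζ)).re < 0 := by simp [hζre]; linarith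
  have hr2 : (-((a:ℂ) + b + ζ)).re < 0 := by simp [hζre]; linarith
  have hr3 : (-(2*(b:ℂ) + ζ)).re < 0 := by simp [hζre]; linarith
  -- the integrand as an indicator function
  have key : (fun t : ℝ => conv (_root_.eta a) (_root_.eta b) (t + s) *
      (starRingEnd ℂ) (conv (_root_.eta a) (_root_.eta b) (t - s)) *
      Complex.exp (-2 * (Real.pi:ℂ) * Complex.I * (ξ:ℂ) * (t:ℂ))) =
      Set.indicator (Ioi m) (fun t : ℝ =>
        (Complex.exp ((-(2*(a:ℂ) + ζ)) * t)
          - (Complex.exp (((b:ℂ)-a) * s) + Complex.exp (-(((b:ℂ)-a) * s)))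
            * Complex.exp ((-((a:ℂ) + b + ζ)) * t)
          + Complex.exp ((-(2*(b:ℂ) + ζ)) * t)) * (((b:ℂ)-a)⁻¹ * ((b:ℂ)-a)⁻¹)) := by
    funext t
    simp only [conv_eta_eta a b ha hb hab]
    by_cases ht : t ∈ Ioi m
    · have hp : 0 < t + s := by simp only [mem_Ioi] at ht; linarith
      have hq : 0 < t - s := by simp only [mem_Ioi] at ht; linarith
      rw [Set.indicator_of_mem ht, if_pos hp, if_pos hq]
      rw [map_div₀, map_sub, conj_cexp_neg, conj_cexp_neg, map_sub, Complex.conj_ofReal,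
        Complex.conj_ofReal]
      have e1 : Complex.exp ((-(2*(a:ℂ) + ζ)) * t) =
          Complex.exp (-(a:ℂ) * (t+s:ℝ)) * Complex.exp (-(a:ℂ) * (t-s:ℝ)) *
          Complex.exp (-2 * (Real.pi:ℂ) * Complex.I * (ξ:ℂ) * (t:ℂ)) := by
        rw [← Complex.exp_add, ← Complex.exp_add]
        congr 1
        rw [hζ]; push_cast; ring
      have e2 : Complex.exp (((b:ℂ)-a) * s) * Complex.exp ((-((a:ℂ) + b + ζ)) * t) =
          Complex.exp (-(a:ℂ) * (t+s:ℝ)) * Complex.exp (-(b:ℂ) * (t-s:ℝ)) *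
          Complex.exp (-2 * (Real.pi:ℂ) * Complex.I * (ξ:ℂ) * (t:ℂ)) := by
        rw [← Complex.exp_add, ← Complex.exp_add, ← Complex.exp_add]
        congr 1
        rw [hζ]; push_cast; ring
      have e3 : Complex.exp (-(((b:ℂ)-a) * s)) * Complex.exp ((-((a:ℂ) + b + ζ)) * t) =
          Complex.exp (-(b:ℂ) * (t+s:ℝ)) * Complex.exp (-(a:ℂ) * (t-s:ℝ)) *
          Complex.exp (-2 * (Real.pi:ℂ) * Complex.I * (ξ:ℂ) * (t:ℂ)) := by
        rw [← Complex.exp_add, ← Complex.exp_add, ← Complex.exp_add]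
        congr 1
        rw [hζ]; push_cast; ring
      have e4 : Complex.exp ((-(2*(b:ℂ) + ζ)) * t) =
          Complex.exp (-(b:ℂ) * (t+s:ℝ)) * Complex.exp (-(b:ℂ) * (t-s:ℝ)) *
          Complex.exp (-2 * (Real.pi:ℂ) * Complex.I * (ξ:ℂ) * (t:ℂ)) := by
        rw [← Complex.exp_add, ← Complex.exp_add]
        congr 1
        rw [hζ]; push_cast; ring
      linear_combination - (((b:ℂ)-a)⁻¹ * ((b:ℂ)-a)⁻¹) * e1 + (((b:ℂ)-a)⁻¹ * ((b:ℂ)-a)⁻¹) * e2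
        + (((b:ℂ)-a)⁻¹ * ((b:ℂ)-a)⁻¹) * e3 - (((b:ℂ)-a)⁻¹ * ((b:ℂ)-a)⁻¹) * e4
    · rw [Set.indicator_of_notMem ht]
      simp only [mem_Ioi, not_lt] at ht
      rcases le_or_gt s 0 with hs0 | hs0
      · have : ¬ 0 < t + s := by
          have : s = -m ∨ m = s := by
            rcases abs_cases s with ⟨h1, _⟩ | ⟨h1, _⟩
            · right; rw [hm, h1]
            · left; rw [hm, h1]; ring
          rcases this with h | h
          · rw [h] at *; push_neg; linarith
          · push_neg; nlinarith [hsm]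
        rw [if_neg this, zero_mul, zero_mul]
      · have : ¬ 0 < t - s := by
          have hms : m = s := by rw [hm, abs_of_pos hs0]
          push_neg; linarith [hms ▸ ht]
        rw [if_neg this, map_zero, mul_zero, zero_mul]
  rw [key, integral_indicator measurableSet_Ioi]
  -- integrability
  have i1 : IntegrableOn (fun t : ℝ => Complex.exp ((-(2*(a:ℂ) + ζ)) * t)) (Ioi m) :=
    integrableOn_cexp_Ioi hr1 m
  have i2 : IntegrableOn (fun t : ℝ => Complex.exp ((-((a:ℂ) + b + ζ)) * t)) (Ioi m) :=
    integrableOn_cexp_Ioi hr2 m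
  have i3 : IntegrableOn (fun t : ℝ => Complex.exp ((-(2*(b:ℂ) + ζ)) * t)) (Ioi m) :=
    integrableOn_cexp_Ioi hr3 m
  -- exponential rewrites at the endpoint
  have q1 : Complex.exp ((-(2*(a:ℂ) + ζ)) * (m:ℂ)) = (A1:ℂ) * E := by
    rw [hA1, Complex.ofReal_exp, hE, ← Complex.exp_add]
    congr 1
    push_cast; ring
  have q2 : Complex.exp ((-((a:ℂ) + b + ζ)) * (m:ℂ)) = (A2:ℂ) * E := by
    rw [hA2, Complex.ofReal_exp, hE, ← Complex.exp_add]
    congr 1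
    push_cast; ring
  have q3 : Complex.exp ((-(2*(b:ℂ) + ζ)) * (m:ℂ)) = (A3:ℂ) * E := by
    rw [hA3, Complex.ofReal_exp, hE, ← Complex.exp_add]
    congr 1
    push_cast; ring
  have hKr : (Real.exp ((b-a)*s) + Real.exp (-((b-a)*s))) * A2 = A1 + A3 := by
    rw [hA1, hA2, hA3, add_mul, ← Real.exp_add, ← Real.exp_add]
    rcases abs_cases s with ⟨h1, _⟩ | ⟨h1, _⟩
    · rw [hm, h1]; ring_nf
    · rw [hm, h1]; ring_nf
  have hK : (Complex.exp (((b:ℂ)-a) * s) + Complex.exp (-(((b:ℂ)-a) * s))) * (A2:ℂ)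
      = (A1:ℂ) + (A3:ℂ) := by
    rw [show Complex.exp (((b:ℂ)-a) * s) = ((Real.exp ((b-a)*s) : ℝ) : ℂ) from by
        rw [Complex.ofReal_exp]; congr 1; push_cast; ring,
      show Complex.exp (-(((b:ℂ)-a) * s)) = ((Real.exp (-((b-a)*s)) : ℝ) : ℂ) from by
        rw [Complex.ofReal_exp]; congr 1; push_cast; ring]
    exact_mod_cast congrArg (fun r : ℝ => (r:ℂ)) hKr
  -- evaluate the three integrals
  have I1 : ∫ t in Ioi m, Complex.exp ((-(2*(a:ℂ) + ζ)) * t) = (A1:ℂ) * E / (2*(a:ℂ) + ζ) := by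
    rw [integral_cexp_Ioi hr1 m, q1, neg_div_neg_eq]
  have IK : ∫ t in Ioi m, (Complex.exp (((b:ℂ)-a) * s) + Complex.exp (-(((b:ℂ)-a) * s)))
      * Complex.exp ((-((a:ℂ) + b + ζ)) * t)
      = ((A1:ℂ) + (A3:ℂ)) * E / ((a:ℂ) + b + ζ) := by
    rw [MeasureTheory.integral_const_mul, integral_cexp_Ioi hr2 m, q2, neg_div_neg_eq]
    rw [mul_div_assoc', div_eq_div_iff hd2 hd2]
    linear_combination E * ((a:ℂ) + b + ζ) * hK
  have I3 : ∫ t in Ioi m, Complex.exp ((-(2*(b:ℂ) + ζ)) * t) = (A3:ℂ) * E / (2*(b:ℂ) + ζ) := by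
    rw [integral_cexp_Ioi hr3 m, q3, neg_div_neg_eq]
  have i2' : IntegrableOn (fun t : ℝ => (Complex.exp (((b:ℂ)-a) * s) + Complex.exp (-(((b:ℂ)-a) * s)))
      * Complex.exp ((-((a:ℂ) + b + ζ)) * t)) (Ioi m) := i2.const_mul _
  have i12 : IntegrableOn (fun t : ℝ => Complex.exp ((-(2*(a:ℂ) + ζ)) * t)
      - (Complex.exp (((b:ℂ)-a) * s) + Complex.exp (-(((b:ℂ)-a) * s)))
      * Complex.exp ((-((a:ℂ) + b + ζ)) * t)) (Ioi m) := i1.sub i2'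
  rw [integral_mul_const, integral_add i12 i3, integral_sub i1 i2', I1, IK, I3]
  -- final nonvanishing
  have hA1p : 0 < A1 := Real.exp_pos _
  have hA3p : 0 < A3 := Real.exp_pos _
  have hNr : b*A1 - a*A3 ≠ 0 := by
    rcases lt_or_gt_of_ne hab with hlt | hlt
    · have hc : A3 ≤ A1 := by
        rw [hA1, hA3]
        apply Real.exp_le_exp.mpr
        nlinarith
      have : a*A3 < b*A1 := by nlinarith
      exact sub_ne_zero.mpr this.ne'
    · have hc : A1 ≤ A3 := by
        rw [hA1, hA3]
        apply Real.exp_le_exp.mpr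
        nlinarith
      have : b*A1 < a*A3 := by nlinarith
      exact sub_ne_zero.mpr this.ne
  have hN : ((b:ℂ)-a) * (((A1:ℂ)-A3)*ζ + 2*((b:ℂ)*A1 - (a:ℂ)*A3)) ≠ 0 := by
    intro h0
    have hform : ((b:ℂ)-a) * (((A1:ℂ)-A3)*ζ + 2*((b:ℂ)*A1 - (a:ℂ)*A3)) =
        (((b-a)*(2*(b*A1-a*A3)) : ℝ) : ℂ) + (((b-a)*(A1-A3)*(2*Real.pi*ξ) : ℝ) : ℂ) * Complex.I := by
      rw [hζ]; push_cast; ring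
    rw [hform] at h0
    have hre := congrArg Complex.re h0
    simp at hre
    rcases hre with h | h
    · exact hab (by linarith)
    · exact hNr (by linarith)
  have hS : (A1:ℂ) * E / (2*(a:ℂ) + ζ) - ((A1:ℂ) + (A3:ℂ)) * E / ((a:ℂ) + b + ζ)
      + (A3:ℂ) * E / (2*(b:ℂ) + ζ) ≠ 0 := by
    intro h0
    have hid : (A1:ℂ) * E / (2*(a:ℂ) + ζ) - ((A1:ℂ) + (A3:ℂ)) * E / ((a:ℂ) + b + ζ)
        + (A3:ℂ) * E / (2*(b:ℂ) + ζ)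
        = E * (((b:ℂ)-a) * (((A1:ℂ)-A3)*ζ + 2*((b:ℂ)*A1 - (a:ℂ)*A3)))
          / ((2*(a:ℂ) + ζ) * ((a:ℂ) + b + ζ) * (2*(b:ℂ) + ζ)) := by
      field_simp
      ring
    rw [hid, div_eq_zero_iff] at h0
    rcases h0 with h0 | h0
    · exact mul_ne_zero (Complex.exp_ne_zero _) hN h0
    · exact mul_ne_zero (mul_ne_zero hd1 hd2) hd3 h0
  exact mul_ne_zero hS (mul_ne_zero (inv_ne_zero hba) (inv_ne_zero hba))

set_option maxHeartbeats 1000000 in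
lemma amb2_ge (a b : ℝ) (ha : 0 < a) (hb : 0 < b) (hab : a ≠ b) (x ξ : ℝ) (hx : 0 ≤ x) :
    ambiguity (conv (_root_.eta a) (fun t => _root_.eta b (-t)))
      (conv (_root_.eta a) (fun t => _root_.eta b (-t))) x ξ ≠ 0 := by
  simp only [ambiguity]
  set s : ℝ := x / 2 with hs
  have hs0 : 0 ≤ s := by rw [hs]; linarith
  set ζ : ℂ := 2 * (Real.pi : ℂ) * Complex.I * (ξ : ℂ) with hζ
  have hζre : ζ.re = 0 := by rw [hζ]; simp
  have hd1 : (2*(a:ℂ) + ζ) ≠ 0 := by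
    intro h
    have := congrArg Complex.re h
    simp [hζre] at this
    linarith
  have hd2 : (2*(b:ℂ) - ζ) ≠ 0 := by
    intro h
    have := congrArg Complex.re h
    simp [hζre] at this
    linarith
  have hd3 : ((b:ℂ) - a - ζ) ≠ 0 := by
    intro h
    apply hab
    have := congrArg Complex.re h
    simp [hζre] at this
    linarith
  have hab2 : ((a:ℂ) + b) ≠ 0 := by
    intro h
    have := congrArg Complex.re h
    simp at this
    linarith
  have hr1 : (-(2*(a:ℂ) + ζ)).re < 0 := by simp [hζre]; linarith
  have hr2 : (0:ℝ) < ((2*(b:ℂ) - ζ)).re := by simp [hζre]; linarith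
  set u : ℂ := Complex.exp (-((2*(a:ℂ) + ζ) * (s:ℂ))) with hu
  set v : ℂ := Complex.exp (-((2*(b:ℂ) - ζ) * (s:ℂ))) with hv
  set C2 : ℂ := ((a:ℂ)+b)⁻¹ * ((a:ℂ)+b)⁻¹ with hC2
  -- the integrand as a sum of three indicator functions
  have key : (fun t : ℝ => conv (_root_.eta a) (fun t => _root_.eta b (-t)) (t + s) *
      (starRingEnd ℂ) (conv (_root_.eta a) (fun t => _root_.eta b (-t)) (t - s)) *
      Complex.exp (-2 * (Real.pi:ℂ) * Complex.I * (ξ:ℂ) * (t:ℂ))) =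
      (fun t : ℝ =>
        Set.indicator (Iic (-s)) (fun t : ℝ => Complex.exp ((2*(b:ℂ) - ζ) * t) * C2) t
        + Set.indicator (Ioc (-s) s) (fun t : ℝ =>
            Complex.exp ((-((a:ℝ)+b)*s : ℝ)) * Complex.exp (((b:ℂ) - a - ζ) * t) * C2) t
        + Set.indicator (Ioi s) (fun t : ℝ => Complex.exp ((-(2*(a:ℂ) + ζ)) * t) * C2) t) := by
    funext t
    simp only [conv_eta_Ieta a b ha hb, Complex.conj_ofReal]
    rcases le_or_gt t (-s) with h1 | h1
    · have hm1 : max 0 (t + s) = 0 := max_eq_left (by linarith)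
      have hm2 : max 0 (t - s) = 0 := max_eq_left (by linarith)
      rw [Set.indicator_of_mem (by simpa using h1),
        Set.indicator_of_notMem (by simp [mem_Ioc]; intro h; linarith),
        Set.indicator_of_notMem (by simp [mem_Ioi]; linarith),
        hm1, hm2]
      have f1 : ((Real.exp (b*(t+s) - (a+b)*0) / (a+b) : ℝ) : ℂ)
          = Complex.exp (((b*(t+s) : ℝ)):ℂ) * ((a:ℂ)+b)⁻¹ := by
        push_cast
        ring_nf
      have f2 : ((Real.exp (b*(t-s) - (a+b)*0) / (a+b) : ℝ) : ℂ)
          = Complex.exp (((b*(t-s) : ℝ)):ℂ) * ((a:ℂ)+b)⁻¹ := by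
        push_cast
        ring_nf
      rw [f1, f2]
      have e1 : Complex.exp ((2*(b:ℂ) - ζ) * t) =
          Complex.exp (((b*(t+s) : ℝ)):ℂ) * Complex.exp (((b*(t-s) : ℝ)):ℂ) *
          Complex.exp (-2 * (Real.pi:ℂ) * Complex.I * (ξ:ℂ) * (t:ℂ)) := by
        rw [← Complex.exp_add, ← Complex.exp_add]
        congr 1
        rw [hζ]; push_cast; ring
      rw [hC2]
      linear_combination -(((a:ℂ)+b)⁻¹ * ((a:ℂ)+b)⁻¹) * e1
    · rcases le_or_gt t s with h2 | h2
      · have hm1 : max 0 (t + s) = t + s := max_eq_right (by linarith)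
        have hm2 : max 0 (t - s) = 0 := max_eq_left (by linarith)
        rw [Set.indicator_of_notMem (by simp [mem_Iic]; linarith),
          Set.indicator_of_mem (by simp [mem_Ioc]; exact ⟨h1, h2⟩),
          Set.indicator_of_notMem (by simp [mem_Ioi]; linarith),
          hm1, hm2]
        have f1 : ((Real.exp (b*(t+s) - (a+b)*(t+s)) / (a+b) : ℝ) : ℂ)
            = Complex.exp (((b*(t+s) - (a+b)*(t+s) : ℝ)):ℂ) * ((a:ℂ)+b)⁻¹ := by
          push_cast
          ring_nf
        have f2 : ((Real.exp (b*(t-s) - (a+b)*0) / (a+b) : ℝ) : ℂ)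
            = Complex.exp (((b*(t-s) : ℝ)):ℂ) * ((a:ℂ)+b)⁻¹ := by
          push_cast
          ring_nf
        rw [f1, f2]
        have e2 : Complex.exp ((-((a:ℝ)+b)*s : ℝ)) * Complex.exp (((b:ℂ) - a - ζ) * t) =
            Complex.exp (((b*(t+s) - (a+b)*(t+s) : ℝ)):ℂ) * Complex.exp (((b*(t-s) : ℝ)):ℂ) *
            Complex.exp (-2 * (Real.pi:ℂ) * Complex.I * (ξ:ℂ) * (t:ℂ)) := by
          rw [← Complex.exp_add, ← Complex.exp_add, ← Complex.exp_add]
          congr 1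
          rw [hζ]; push_cast; ring
        rw [hC2]
        linear_combination -(((a:ℂ)+b)⁻¹ * ((a:ℂ)+b)⁻¹) * e2
      · have hm1 : max 0 (t + s) = t + s := max_eq_right (by linarith)
        have hm2 : max 0 (t - s) = t - s := max_eq_right (by linarith)
        rw [Set.indicator_of_notMem (by simp [mem_Iic]; linarith),
          Set.indicator_of_notMem (by simp [mem_Ioc]; intro h; linarith),
          Set.indicator_of_mem (by simpa using h2),
          hm1, hm2]
        have f1 : ((Real.exp (b*(t+s) - (a+b)*(t+s)) / (a+b) : ℝ) : ℂ)
            = Complex.exp (((b*(t+s) - (a+b)*(t+s) : ℝ)):ℂ) * ((a:ℂ)+b)⁻¹ := by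
          push_cast
          ring_nf
        have f2 : ((Real.exp (b*(t-s) - (a+b)*(t-s)) / (a+b) : ℝ) : ℂ)
            = Complex.exp (((b*(t-s) - (a+b)*(t-s) : ℝ)):ℂ) * ((a:ℂ)+b)⁻¹ := by
          push_cast
          ring_nf
        rw [f1, f2]
        have e3 : Complex.exp ((-(2*(a:ℂ) + ζ)) * t) =
            Complex.exp (((b*(t+s) - (a+b)*(t+s) : ℝ)):ℂ) *
            Complex.exp (((b*(t-s) - (a+b)*(t-s) : ℝ)):ℂ) *
            Complex.exp (-2 * (Real.pi:ℂ) * Complex.I * (ξ:ℂ) * (t:ℂ)) := by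
          rw [← Complex.exp_add, ← Complex.exp_add]
          congr 1
          rw [hζ]; push_cast; ring
        rw [hC2]
        linear_combination -(((a:ℂ)+b)⁻¹ * ((a:ℂ)+b)⁻¹) * e3
  rw [key]
  -- integrability of each piece
  have hI1 : Integrable (Set.indicator (Iic (-s))
      (fun t : ℝ => Complex.exp ((2*(b:ℂ) - ζ) * t) * C2)) := by
    rw [integrable_indicator_iff measurableSet_Iic]
    exact (integrableOn_cexp_Iic hr2 (-s)).mul_const _
  have hI2 : Integrable (Set.indicator (Ioc (-s) s)
      (fun t : ℝ => Complex.exp ((-((a:ℝ)+b)*s : ℝ)) * Complex.exp (((b:ℂ) - a - ζ) * t) * C2)) := by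
    rw [integrable_indicator_iff measurableSet_Ioc]
    exact (((integrableOn_cexp_Ioc ((b:ℂ) - a - ζ) (-s) s).const_mul _).mul_const _)
  have hI3 : Integrable (Set.indicator (Ioi s)
      (fun t : ℝ => Complex.exp ((-(2*(a:ℂ) + ζ)) * t) * C2)) := by
    rw [integrable_indicator_iff measurableSet_Ioi]
    exact (integrableOn_cexp_Ioi hr1 s).mul_const _
  have hI12 : Integrable (fun t : ℝ =>
      Set.indicator (Iic (-s)) (fun t : ℝ => Complex.exp ((2*(b:ℂ) - ζ) * t) * C2) t
      + Set.indicator (Ioc (-s) s) (fun t : ℝ =>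
          Complex.exp ((-((a:ℝ)+b)*s : ℝ)) * Complex.exp (((b:ℂ) - a - ζ) * t) * C2) t) :=
    hI1.add hI2
  rw [integral_add hI12 hI3, integral_add hI1 hI2,
    integral_indicator measurableSet_Iic, integral_indicator measurableSet_Ioc,
    integral_indicator measurableSet_Ioi,
    integral_mul_const, integral_mul_const, integral_mul_const,
    MeasureTheory.integral_const_mul,
    integral_cexp_Iic hr2 (-s), integral_cexp_Ioc hd3 (by linarith : -s ≤ s),
    integral_cexp_Ioi hr1 s]
  have p1 : Complex.exp ((2*(b:ℂ) - ζ) * ((-s : ℝ):ℂ)) = v := by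
    rw [hv]; congr 1; push_cast; ring
  have p3 : Complex.exp ((-(2*(a:ℂ) + ζ)) * ((s : ℝ):ℂ)) = u := by
    rw [hu]; congr 1; push_cast; ring
  have P2 : Complex.exp ((-((a:ℝ)+b)*s : ℝ)) *
      ((Complex.exp (((b:ℂ) - a - ζ) * ((s:ℝ):ℂ)) - Complex.exp (((b:ℂ) - a - ζ) * ((-s:ℝ):ℂ)))
        / ((b:ℂ) - a - ζ)) = (u - v) / ((b:ℂ) - a - ζ) := by
    rw [mul_div_assoc', mul_sub]
    congr 2
    · rw [hu, ← Complex.exp_add]; congr 1; push_cast; ring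
    · rw [hv, ← Complex.exp_add]; congr 1; push_cast; ring
  rw [p1, p3, P2, neg_div_neg_eq]
  have hnum : u * (2*(b:ℂ) - ζ) - v * (2*(a:ℂ) + ζ) ≠ 0 := by
    rw [sub_ne_zero]
    intro h
    have hh := congrArg Complex.normSq h
    rw [map_mul, map_mul] at hh
    have hu2 : Complex.normSq u = Real.exp (-(2*a*s)) ^ 2 := by
      rw [hu, Complex.normSq_eq_norm_sq, Complex.norm_exp]
      congr 2
      rw [hζ]; simp; try ring
    have hv2 : Complex.normSq v = Real.exp (-(2*b*s)) ^ 2 := by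
      rw [hv, Complex.normSq_eq_norm_sq, Complex.norm_exp]
      congr 2
      rw [hζ]; simp; try ring
    have hz1 : Complex.normSq (2*(b:ℂ) - ζ) = 4*b^2 + (2*Real.pi*ξ)^2 := by
      rw [hζ]; simp [Complex.normSq_apply]; try ring
    have hz2 : Complex.normSq (2*(a:ℂ) + ζ) = 4*a^2 + (2*Real.pi*ξ)^2 := by
      rw [hζ]; simp [Complex.normSq_apply]; try ring
    rw [hu2, hv2, hz1, hz2] at hh
    have h1 : 0 < Real.exp (-(2*b*s)) := Real.exp_pos _
    have h2 : 0 < Real.exp (-(2*a*s)) := Real.exp_pos _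
    rcases lt_or_gt_of_ne hab with hl | hl
    · have hle : Real.exp (-(2*b*s)) ≤ Real.exp (-(2*a*s)) := Real.exp_le_exp.mpr (by nlinarith)
      have hsq : Real.exp (-(2*b*s)) ^ 2 ≤ Real.exp (-(2*a*s)) ^ 2 := by nlinarith
      have k1 : Real.exp (-(2*b*s))^2 * (4*a^2+(2*Real.pi*ξ)^2)
          < Real.exp (-(2*b*s))^2 * (4*b^2+(2*Real.pi*ξ)^2) := by
        apply mul_lt_mul_of_pos_left _ (by positivity)
        nlinarith
      have k2 : Real.exp (-(2*b*s))^2 * (4*b^2+(2*Real.pi*ξ)^2)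
          ≤ Real.exp (-(2*a*s))^2 * (4*b^2+(2*Real.pi*ξ)^2) :=
        mul_le_mul_of_nonneg_right hsq (by positivity)
      linarith
    · have hle : Real.exp (-(2*a*s)) ≤ Real.exp (-(2*b*s)) := Real.exp_le_exp.mpr (by nlinarith)
      have hsq : Real.exp (-(2*a*s)) ^ 2 ≤ Real.exp (-(2*b*s)) ^ 2 := by nlinarith
      have k1 : Real.exp (-(2*a*s))^2 * (4*b^2+(2*Real.pi*ξ)^2)
          ≤ Real.exp (-(2*b*s))^2 * (4*b^2+(2*Real.pi*ξ)^2) :=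
        mul_le_mul_of_nonneg_right hsq (by positivity)
      have k2 : Real.exp (-(2*b*s))^2 * (4*b^2+(2*Real.pi*ξ)^2)
          < Real.exp (-(2*b*s))^2 * (4*a^2+(2*Real.pi*ξ)^2) := by
        apply mul_lt_mul_of_pos_left _ (by positivity)
        nlinarith
      linarith
  have hC2ne : C2 ≠ 0 := by
    rw [hC2]; exact mul_ne_zero (inv_ne_zero hab2) (inv_ne_zero hab2)
  have hS : v / (2*(b:ℂ) - ζ) + (u - v) / ((b:ℂ) - a - ζ) + u / (2*(a:ℂ) + ζ) ≠ 0 := by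
    rw [show v / (2*(b:ℂ) - ζ) + (u - v) / ((b:ℂ) - a - ζ) + u / (2*(a:ℂ) + ζ)
        = ((a:ℂ)+b) * (u * (2*(b:ℂ) - ζ) - v * (2*(a:ℂ) + ζ))
          / ((2*(a:ℂ)+ζ) * (2*(b:ℂ)-ζ) * ((b:ℂ)-a-ζ)) from by
      field_simp
      ring]
    exact div_ne_zero (mul_ne_zero hab2 hnum) (mul_ne_zero (mul_ne_zero hd1 hd2) hd3)
  have hfactor : v / (2*(b:ℂ) - ζ) * C2 + (u - v) / ((b:ℂ) - a - ζ) * C2 + u / (2*(a:ℂ) + ζ) * C2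
      = (v / (2*(b:ℂ) - ζ) + (u - v) / ((b:ℂ) - a - ζ) + u / (2*(a:ℂ) + ζ)) * C2 := by ring
  rw [hfactor]
  exact mul_ne_zero hS hC2ne

lemma ambiguity_conj (f : ℝ → ℂ) (hf : ∀ u, (starRingEnd ℂ) (f u) = f u) (x ξ : ℝ) :
    ambiguity f f x ξ = (starRingEnd ℂ) (ambiguity f f (-x) (-ξ)) := by
  simp only [ambiguity]
  rw [← integral_conj]
  congr 1
  funext t
  rw [map_mul, map_mul, Complex.conj_conj]
  rw [show (t + -x / 2 : ℝ) = t - x / 2 from by ring,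
    show (t - -x / 2 : ℝ) = t + x / 2 from by ring]
  rw [show (starRingEnd ℂ) (Complex.exp (-2 * (Real.pi:ℂ) * Complex.I * ((-ξ : ℝ):ℂ) * (t:ℂ)))
      = Complex.exp (-2 * (Real.pi:ℂ) * Complex.I * (ξ:ℂ) * (t:ℂ)) from by
    rw [← Complex.exp_conj]
    congr 1
    simp only [map_mul, map_neg, map_ofNat, Complex.conj_I, Complex.conj_ofReal,
      Complex.ofReal_neg]
    ring]
  simp only [hf]
  ring

theorem ambiguity_conv_eta_ne_zero (a b : ℝ) (ha : 0 < a) (hb : 0 < b) (hab : a ≠ b) :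
    (∀ x ξ : ℝ,
      ambiguity (conv (eta a) (eta b)) (conv (eta a) (eta b)) x ξ ≠ 0) ∧
    (∀ x ξ : ℝ,
      ambiguity (conv (eta a) (fun t => eta b (-t)))
        (conv (eta a) (fun t => eta b (-t))) x ξ ≠ 0) := by
  constructor
  · exact fun x ξ => amb1 a b ha hb hab x ξ
  · intro x ξ
    rcases le_or_gt 0 x with hx | hx
    · exact amb2_ge a b ha hb hab x ξ hx
    · have hconj : ∀ u, (starRingEnd ℂ) (conv (_root_.eta a) (fun t => _root_.eta b (-t)) u)
          = conv (_root_.eta a) (fun t => _root_.eta b (-t)) u := by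
        intro u
        simp only [conv_eta_Ieta a b ha hb]
        exact Complex.conj_ofReal _
      rw [ambiguity_conj _ hconj x ξ]
      simp only [ne_eq, map_eq_zero]
      exact amb2_ge a b ha hb hab (-x) (-ξ) (by linarith)
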